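/- Let A be a Novikov algebra and I a two-sided ideal of A which is right nilpotent, i.e., I^{[k]} = 0 for some k, where I^{[1]} = I and I^{[m+1]} = I^{[m]}·I. Suppose that for every x ∈ A there exists n ≥ 1 with x^n ∈ I, where x^m denotes the left-normed power. Then A is r-nil: for every x ∈ A there exists N ≥ 1 with x^N = 0. -/

import Mathlib

/-- Left-normed power: `lpow x 1 = x`, `lpow x (k+1) = lpow x k * x`
(the value at `0` is a junk value). -/
def lpow {A : Type*} [Mul A] [Zero A] (x : A) : ℕ → A
  | 0 => 0
  | 1 => x
  | (n + 2) => lpow x (n + 1) * x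

/-- Right powers of an ideal: `rPow F I 1 = I` and
`rPow F I (k+1) = span (rPow F I k · I)` (the value at `0` is a junk value). -/
def rPow (F : Type*) {A : Type*} [Field F] [NonUnitalNonAssocRing A]
    [Module F A] (I : Submodule F A) : ℕ → Submodule F A
  | 0 => ⊥
  | 1 => I
  | (k + 2) =>
      Submodule.span F {z : A | ∃ a ∈ rPow F I (k + 1), ∃ b ∈ I, a * b = z}

/-!
In a Novikov algebra right multiplications commute, and combining this with left symmetry one
finds, for `a, b ≥ 0`,
`x^(a+b+4) = (b+2) • x^(a+2) x^(b+2) - (b+1) • x^(a+1) x^(b+3)`.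
So every sufficiently high power of `x` is a combination of products `x^p x^q` with both `p` and
`q` large. If all high powers lie in `I` and all high powers lie in `I^[k]`, then all high powers
lie in `I^[k+1]`; climbing up to the vanishing right power of `I` kills all high powers of `x`.
-/

open Filter

section Powers

variable {A : Type*}

theorem lpow_succ [Mul A] [Zero A] (x : A) {m : ℕ} (hm : 1 ≤ m) :
    lpow x (m + 1) = lpow x m * x := by
  obtain ⟨n, rfl⟩ := Nat.exists_eq_add_of_le' hm
  rfl

theorem eventually_lpow_mem [Mul A] [Zero A] {S : Set A} (hS : ∀ a ∈ S, ∀ b : A, a * b ∈ S)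
    {x : A} {n : ℕ} (hn : 1 ≤ n) (hxn : lpow x n ∈ S) :
    ∀ᶠ m in atTop, lpow x m ∈ S := by
  refine eventually_atTop.2 ⟨n, fun m hm => ?_⟩
  induction m, hm using Nat.le_induction with
  | base => exact hxn
  | succ m hm ih =>
    rw [lpow_succ x (hn.trans hm)]
    exact hS _ ih x

end Powers

section Novikov

variable {A : Type*} [NonUnitalNonAssocRing A]

theorem lpow_succ_mul (hNov2 : ∀ x y z : A, (x * y) * z = (x * z) * y) (x y : A) (a : ℕ) :
    lpow x (a + 2) * y = (lpow x (a + 1) * y) * x :=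
  hNov2 (lpow x (a + 1)) x y

theorem mul_lpow
    (hNov1 : ∀ x y z : A, (x * y) * z - x * (y * z) = (y * x) * z - y * (x * z))
    (hNov2 : ∀ x y z : A, (x * y) * z = (x * z) * y) (x : A) (b : ℕ) :
    x * lpow x (b + 2)
      = lpow x (b + 3) + (b + 1) • (lpow x (b + 1) * (x * x) - lpow x (b + 3)) := by
  induction b with
  | zero =>
    show x * (x * x) = (x * x) * x + (0 + 1) • (x * (x * x) - (x * x) * x)
    simp
  | succ b ih =>
    have hls : (x * lpow x (b + 2)) * x - x * lpow x (b + 3)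
        = lpow x (b + 4) - lpow x (b + 2) * (x * x) := hNov1 x (lpow x (b + 2)) x
    have hsucc : lpow x (b + 3) * x = lpow x (b + 4) := rfl
    rw [ih, add_mul, smul_mul_assoc, sub_mul, hsucc, ← lpow_succ_mul hNov2] at hls
    show x * lpow x (b + 3)
      = lpow x (b + 4) + (b + 1 + 1) • (lpow x (b + 2) * (x * x) - lpow x (b + 4))
    linear_combination (norm := module) -hls

theorem lpow_mul_lpow
    (hNov1 : ∀ x y z : A, (x * y) * z - x * (y * z) = (y * x) * z - y * (x * z))
    (hNov2 : ∀ x y z : A, (x * y) * z = (x * z) * y) (x : A) (a b : ℕ) :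
    lpow x (a + 1) * lpow x (b + 2)
      = lpow x (a + b + 3)
        + (b + 1) • (lpow x (a + b + 1) * (x * x) - lpow x (a + b + 3)) := by
  induction a with
  | zero =>
    simp only [zero_add]
    exact mul_lpow hNov1 hNov2 x b
  | succ a ih =>
    rw [Nat.add_right_comm a 1 b, lpow_succ_mul hNov2, ih, add_mul, smul_mul_assoc, sub_mul,
      ← lpow_succ_mul hNov2]
    rfl

theorem lpow_eq_sub_smul_lpow_mul_lpow
    (hNov1 : ∀ x y z : A, (x * y) * z - x * (y * z) = (y * x) * z - y * (x * z))
    (hNov2 : ∀ x y z : A, (x * y) * z = (x * z) * y) (x : A) (a b : ℕ) :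
    lpow x (a + b + 4)
      = (b + 2) • (lpow x (a + 2) * lpow x (b + 2))
        - (b + 1) • (lpow x (a + 1) * lpow x (b + 3)) := by
  rw [lpow_mul_lpow hNov1 hNov2 x (a + 1) b, lpow_mul_lpow hNov1 hNov2 x a (b + 1)]
  rw [show a + 1 + b + 3 = a + b + 4 by omega, show a + 1 + b + 1 = a + (b + 1) + 1 by omega,
    show a + (b + 1) + 3 = a + b + 4 by omega]
  module

end Novikov

section RightPowers

variable {F A : Type*} [Field F] [NonUnitalNonAssocRing A] [Module F A]

theorem mul_mem_rPow_succ_succ {I : Submodule F A} {k : ℕ} {a b : A}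
    (ha : a ∈ rPow F I (k + 1)) (hb : b ∈ I) : a * b ∈ rPow F I (k + 2) :=
  Submodule.subset_span ⟨a, ha, b, hb, rfl⟩

theorem eventually_lpow_mem_rPow
    (hNov1 : ∀ x y z : A, (x * y) * z - x * (y * z) = (y * x) * z - y * (x * z))
    (hNov2 : ∀ x y z : A, (x * y) * z = (x * z) * y)
    {I : Submodule F A} {x : A} (hI : ∀ᶠ m in atTop, lpow x m ∈ I)
    {k : ℕ} (hk : 1 ≤ k) : ∀ᶠ m in atTop, lpow x m ∈ rPow F I k := by
  induction k, hk using Nat.le_induction with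
  | base => exact hI
  | succ k hk ih =>
    obtain ⟨k, rfl⟩ := Nat.exists_eq_add_of_le' hk
    obtain ⟨n, hn⟩ := eventually_atTop.1 hI
    obtain ⟨M, hM⟩ := eventually_atTop.1 ih
    refine eventually_atTop.2 ⟨M + n + 4, fun m hm => ?_⟩
    obtain ⟨a, rfl⟩ : ∃ a, m = a + n + 4 := ⟨m - n - 4, by omega⟩
    rw [lpow_eq_sub_smul_lpow_mul_lpow hNov1 hNov2]
    exact sub_mem
      (nsmul_mem (mul_mem_rPow_succ_succ (hM _ (by omega)) (hn _ (by omega))) _)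
      (nsmul_mem (mul_mem_rPow_succ_succ (hM _ (by omega)) (hn _ (by omega))) _)

end RightPowers

theorem novikov_rnil_extension_general
    (F : Type*) (A : Type*) [Field F] [NonUnitalNonAssocRing A]
    [Module F A]
    (hNov1 : ∀ x y z : A, (x * y) * z - x * (y * z) = (y * x) * z - y * (x * z))
    (hNov2 : ∀ x y z : A, (x * y) * z = (x * z) * y)
    (I : Submodule F A)
    (hIright : ∀ a ∈ I, ∀ b : A, a * b ∈ I)
    (hInilp : ∃ k : ℕ, 1 ≤ k ∧ rPow F I k = ⊥)
    (hquot : ∀ x : A, ∃ n : ℕ, 1 ≤ n ∧ lpow x n ∈ I) :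
    ∀ x : A, ∃ N : ℕ, 1 ≤ N ∧ lpow x N = 0 := by
  intro x
  obtain ⟨k, hk, hIk⟩ := hInilp
  obtain ⟨n, hn, hxn⟩ := hquot x
  have hI := eventually_lpow_mem hIright hn hxn
  obtain ⟨N, hN, hN1⟩ :=
    ((eventually_lpow_mem_rPow hNov1 hNov2 hI hk).and (eventually_ge_atTop 1)).exists
  rw [hIk] at hN
  exact ⟨N, hN1, (Submodule.mem_bot F).1 hN⟩

/-- **Theorem 1, second part.** Let `A` be a Novikov algebra
(over a field `F`) and `I` a right nilpotent two-sided ideal of `A`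
(`I^{[k]} = 0` for some `k`).  If for every `x ∈ A` there exists `n ≥ 1` with
`x^n ∈ I` (i.e. `A/I` is r-nil), then `A` is r-nil: every `x ∈ A` has a
vanishing left-normed power. -/
theorem novikov_rnil_extension
    (F : Type*) (A : Type*) [Field F] [NonUnitalNonAssocRing A]
    [Module F A] [IsScalarTower F A A] [SMulCommClass F A A]
    (hNov1 : ∀ x y z : A, (x * y) * z - x * (y * z) = (y * x) * z - y * (x * z))
    (hNov2 : ∀ x y z : A, (x * y) * z = (x * z) * y)
    (I : Submodule F A)
    (hIright : ∀ a ∈ I, ∀ b : A, a * b ∈ I)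
    (hIleft : ∀ a ∈ I, ∀ b : A, b * a ∈ I)
    (hInilp : ∃ k : ℕ, 1 ≤ k ∧ rPow F I k = ⊥)
    (hquot : ∀ x : A, ∃ n : ℕ, 1 ≤ n ∧ lpow x n ∈ I) :
    ∀ x : A, ∃ N : ℕ, 1 ≤ N ∧ lpow x N = 0 :=
  novikov_rnil_extension_general F A hNov1 hNov2 I hIright hInilp hquot
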